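/- arXiv:1804.00346 — 4 statements merged into one kernel-verified Lean document; each statement's English description precedes it below -/
import Mathlib

section
/- Let X and X' be i.i.d. real random variables with E[X] = 0 and E[X^2] < ∞. Then for every z ≥ 0 and every α ∈ [0,1], E[(X−X')^2 · 1{|X−X'| ≥ z}] ≤ 2·E[X^2 · 1{|X| ≥ αz}] + 2·E[X^2 · 1{|X| ≥ (1−α)z}]. -/
/-!
Since `|X - X'| ≤ |X| + |X'|`, the event `|X - X'| ≥ z` is covered by `|X| ≥ α z` and
`|X'| ≥ (1 - α) z`, so it suffices to bound `E[(X - Y)² 1{|X| ≥ c}]` by `2 E[X² 1{|X| ≥ c}]` for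
independent copies `X`, `Y` with `E[Y] = 0`. Expanding the square, the cross term vanishes by
independence and the left side becomes `E[X² 1{|X| ≥ c}] + P(|X| ≥ c) E[X²]`. Finally
`P(|X| ≥ c) E[X²] ≤ E[X² 1{|X| ≥ c}]`: the event `{|X| ≥ c}` is exactly where `X²` is large, so
it is positively correlated with `X²` (a Chebyshev–Harris association inequality).
-/

open MeasureTheory ProbabilityTheory

section

variable {Ω : Type*} [MeasurableSpace Ω] {μ : Measure Ω}

section ite

variable {E : Type*} [NormedAddCommGroup E] {p : Ω → Prop} [DecidablePred p] {f : Ω → E}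

lemma integral_ite_eq_setIntegral [NormedSpace ℝ E] (hp : NullMeasurableSet {ω | p ω} μ) :
    ∫ ω, (if p ω then f ω else 0) ∂μ = ∫ ω in {ω | p ω}, f ω ∂μ := by
  rw [← integral_indicator₀ hp]
  simp [Set.indicator_apply]

lemma MeasureTheory.Integrable.ite_zero (hf : Integrable f μ)
    (hp : NullMeasurableSet {ω | p ω} μ) :
    Integrable (fun ω => if p ω then f ω else 0) μ := by
  refine (hf.indicator₀ hp).congr (Filter.Eventually.of_forall fun ω => ?_)
  simp [Set.indicator_apply]

end ite

lemma integral_mul_measureReal_le_setIntegral [IsProbabilityMeasure μ] {g : Ω → ℝ} {A : Set Ω}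
    {t : ℝ} (hg : Integrable g μ) (hA : NullMeasurableSet A μ)
    (h_ge : ∀ ω ∈ A, t ≤ g ω) (h_le : ∀ ω ∉ A, g ω ≤ t) :
    (∫ ω, g ω ∂μ) * μ.real A ≤ ∫ ω in A, g ω ∂μ := by
  have h_in : t * μ.real A ≤ ∫ ω in A, g ω ∂μ := by
    simpa [mul_comm] using
      setIntegral_mono_on₀ (integrableOn_const (by finiteness)) hg.integrableOn hA h_ge
  have h_out : ∫ ω in Aᶜ, g ω ∂μ ≤ t * μ.real Aᶜ := by
    simpa [mul_comm] using
      setIntegral_mono_on₀ hg.integrableOn (integrableOn_const (by finiteness)) hA.compl h_le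
  have h_compl : μ.real Aᶜ = 1 - μ.real A := by
    rw [← probReal_univ (μ := μ), ← measureReal_add_measureReal_compl₀ hA, add_sub_cancel_left]
  rw [h_compl] at h_out
  rw [← integral_add_compl₀ hA hg]
  -- with `p = μ.real A`: `p ∫_{Aᶜ} g ≤ p (1 - p) t ≤ (1 - p) ∫_A g`
  nlinarith [mul_le_mul_of_nonneg_right h_in (sub_nonneg.2 (measureReal_le_one (μ := μ) (s := A))),
    mul_le_mul_of_nonneg_right h_out (measureReal_nonneg (μ := μ) (s := A))]

lemma AEMeasurable.nullMeasurableSet_le_abs {X : Ω → ℝ} (hX : AEMeasurable X μ) (c : ℝ) :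
    NullMeasurableSet {ω | c ≤ |X ω|} μ :=
  hX.nullMeasurableSet_preimage (measurableSet_le measurable_const measurable_abs)

lemma integral_sq_mul_measureReal_le_setIntegral_sq [IsProbabilityMeasure μ] {X : Ω → ℝ}
    (hX : MemLp X 2 μ) (c : ℝ) :
    (∫ ω, X ω ^ 2 ∂μ) * μ.real {ω | c ≤ |X ω|} ≤ ∫ ω in {ω | c ≤ |X ω|}, X ω ^ 2 ∂μ := by
  -- `max c 0 ^ 2` separates the values of `X ^ 2` on the event and off it, also when `c < 0`.
  refine integral_mul_measureReal_le_setIntegral (t := max c 0 ^ 2) hX.integrable_sq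
    (hX.aemeasurable.nullMeasurableSet_le_abs c)
    (fun ω (h : c ≤ |X ω|) => ?_) (fun ω (h : ¬c ≤ |X ω|) => ?_)
  · rw [← sq_abs (X ω)]
    exact pow_le_pow_left₀ (le_max_right c 0) (max_le h (abs_nonneg _)) 2
  · rw [← sq_abs (X ω)]
    exact pow_le_pow_left₀ (abs_nonneg _) ((not_le.1 h).le.trans (le_max_left c 0)) 2

lemma ProbabilityTheory.IndepFun.setIntegral_preimage_mul {𝓧 𝓨 : Type*} [MeasurableSpace 𝓧]
    [MeasurableSpace 𝓨] {X : Ω → 𝓧} {Y : Ω → 𝓨} {S : Set 𝓧} {f : 𝓧 → ℝ} {g : 𝓨 → ℝ}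
    (hXY : IndepFun X Y μ) (hX : AEMeasurable X μ) (hY : AEMeasurable Y μ)
    (hS : MeasurableSet S) (hf : Measurable f) (hg : Measurable g) :
    ∫ ω in X ⁻¹' S, f (X ω) * g (Y ω) ∂μ = (∫ ω in X ⁻¹' S, f (X ω) ∂μ) * ∫ ω, g (Y ω) ∂μ := by
  have hA := hX.nullMeasurableSet_preimage hS
  calc ∫ ω in X ⁻¹' S, f (X ω) * g (Y ω) ∂μ
      = ∫ ω, S.indicator f (X ω) * g (Y ω) ∂μ := by
        rw [← integral_indicator₀ hA]
        congr with ω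
        by_cases h : X ω ∈ S <;> simp [h]
    _ = (∫ ω, S.indicator f (X ω) ∂μ) * ∫ ω, g (Y ω) ∂μ :=
        hXY.integral_fun_comp_mul_comp hX hY (hf.indicator hS).aestronglyMeasurable
          hg.aestronglyMeasurable
    _ = (∫ ω in X ⁻¹' S, f (X ω) ∂μ) * ∫ ω, g (Y ω) ∂μ := by
        rw [← integral_indicator₀ hA]
        rfl

lemma ProbabilityTheory.IndepFun.setIntegral_preimage_sub_sq [IsProbabilityMeasure μ]
    {X Y : Ω → ℝ} {S : Set ℝ}
    (hXY : IndepFun X Y μ) (hX : MemLp X 2 μ) (hY : MemLp Y 2 μ) (hY0 : ∫ ω, Y ω ∂μ = 0)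
    (hS : MeasurableSet S) :
    ∫ ω in X ⁻¹' S, (X ω - Y ω) ^ 2 ∂μ
      = ∫ ω in X ⁻¹' S, X ω ^ 2 ∂μ + μ.real (X ⁻¹' S) * ∫ ω, Y ω ^ 2 ∂μ := by
  have h_cross : ∫ ω in X ⁻¹' S, X ω * Y ω ∂μ = 0 := by
    rw [hXY.setIntegral_preimage_mul (f := fun x => x) (g := fun y => y) hX.aemeasurable
      hY.aemeasurable hS measurable_id measurable_id, hY0, mul_zero]
  have h_sq : ∫ ω in X ⁻¹' S, Y ω ^ 2 ∂μ = μ.real (X ⁻¹' S) * ∫ ω, Y ω ^ 2 ∂μ := by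
    simpa using hXY.setIntegral_preimage_mul (f := fun _ => 1) (g := fun y => y ^ 2)
      hX.aemeasurable hY.aemeasurable hS measurable_const (measurable_id.pow_const 2)
  have hX2 : IntegrableOn (fun ω => X ω ^ 2) (X ⁻¹' S) μ := hX.integrable_sq.integrableOn
  have hY2 : IntegrableOn (fun ω => Y ω ^ 2) (X ⁻¹' S) μ := hY.integrable_sq.integrableOn
  have hXY_int : IntegrableOn (fun ω => X ω * Y ω) (X ⁻¹' S) μ :=
    (hX.integrable_mul hY).integrableOn
  simp_rw [sub_sq', mul_assoc]
  rw [integral_sub (hX2.fun_add hY2) (hXY_int.const_mul 2), integral_add hX2 hY2,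
    integral_const_mul, h_cross, h_sq, mul_zero, sub_zero]

lemma integral_ite_sub_sq_le_two_mul_integral_ite_sq [IsProbabilityMeasure μ] {X Y : Ω → ℝ}
    (hXY : IndepFun X Y μ) (hXY_law : IdentDistrib X Y μ μ) (hX : MemLp X 2 μ)
    (hY0 : ∫ ω, Y ω ∂μ = 0) (c : ℝ) :
    ∫ ω, (if c ≤ |X ω| then (X ω - Y ω) ^ 2 else 0) ∂μ
      ≤ 2 * ∫ ω, (if c ≤ |X ω| then X ω ^ 2 else 0) ∂μ := by
  have h_split := hXY.setIntegral_preimage_sub_sq hX (hXY_law.memLp_iff.1 hX) hY0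
    (measurableSet_le measurable_const measurable_abs : MeasurableSet {x : ℝ | c ≤ |x|})
  have h_second : ∫ ω, Y ω ^ 2 ∂μ = ∫ ω, X ω ^ 2 ∂μ := hXY_law.sq.integral_eq.symm
  rw [Set.preimage_ofPred_eq, h_second] at h_split
  rw [integral_ite_eq_setIntegral (hX.aemeasurable.nullMeasurableSet_le_abs c),
    integral_ite_eq_setIntegral (hX.aemeasurable.nullMeasurableSet_le_abs c), h_split]
  linarith [integral_sq_mul_measureReal_le_setIntegral_sq hX c]

lemma ite_sub_sq_le_ite_add_ite {x y a b z : ℝ} (h : a + b ≤ z) :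
    (if z ≤ |x - y| then (x - y) ^ 2 else 0)
      ≤ (if a ≤ |x| then (x - y) ^ 2 else 0) + (if b ≤ |y| then (y - x) ^ 2 else 0) := by
  have h_tri : |x - y| ≤ |x| + |y| := abs_sub x y
  have h_symm : (y - x) ^ 2 = (x - y) ^ 2 := by ring
  split_ifs <;> nlinarith [sq_nonneg (x - y)]

end

theorem quadratic_tails_symmetrization_alpha_general
    {Ω : Type*} [MeasurableSpace Ω] (μ : Measure Ω) [IsProbabilityMeasure μ]
    (X X' : Ω → ℝ)
    (hindep : IndepFun X X' μ) (hid : IdentDistrib X X' μ μ)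
    (hmean : ∫ ω, X ω ∂μ = 0)
    (hL2 : Integrable (fun ω => (X ω) ^ 2) μ)
    (z : ℝ) (α : ℝ) :
    (∫ ω, (if z ≤ |X ω - X' ω| then (X ω - X' ω) ^ 2 else 0) ∂μ)
      ≤ 2 * (∫ ω, (if α * z ≤ |X ω| then (X ω) ^ 2 else 0) ∂μ)
        + 2 * (∫ ω, (if (1 - α) * z ≤ |X ω| then (X ω) ^ 2 else 0) ∂μ) := by
  have hX : MemLp X 2 μ :=
    (memLp_two_iff_integrable_sq hid.aemeasurable_fst.aestronglyMeasurable).2 hL2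
  have hX' : MemLp X' 2 μ := hid.memLp_iff.1 hX
  have hmean' : ∫ ω, X' ω ∂μ = 0 := hid.integral_eq ▸ hmean
  have h_int_A : Integrable (fun ω => if α * z ≤ |X ω| then (X ω - X' ω) ^ 2 else 0) μ :=
    (hX.sub hX').integrable_sq.ite_zero (hX.aemeasurable.nullMeasurableSet_le_abs _)
  have h_int_B : Integrable (fun ω => if (1 - α) * z ≤ |X' ω| then (X' ω - X ω) ^ 2 else 0) μ :=
    (hX'.sub hX).integrable_sq.ite_zero (hX'.aemeasurable.nullMeasurableSet_le_abs _)
  have h_tail_law : ∫ ω, (if (1 - α) * z ≤ |X' ω| then X' ω ^ 2 else 0) ∂μ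
      = ∫ ω, (if (1 - α) * z ≤ |X ω| then X ω ^ 2 else 0) ∂μ :=
    (hid.comp (Measurable.ite (measurableSet_le measurable_const measurable_abs)
      (measurable_id.pow_const 2) measurable_const)).integral_eq.symm
  calc (∫ ω, (if z ≤ |X ω - X' ω| then (X ω - X' ω) ^ 2 else 0) ∂μ)
      ≤ ∫ ω, ((if α * z ≤ |X ω| then (X ω - X' ω) ^ 2 else 0)
          + (if (1 - α) * z ≤ |X' ω| then (X' ω - X ω) ^ 2 else 0)) ∂μ :=
        integral_mono_of_nonneg (Filter.Eventually.of_forall fun ω => by dsimp; positivity)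
          (h_int_A.add h_int_B)
          (Filter.Eventually.of_forall fun ω => ite_sub_sq_le_ite_add_ite (le_of_eq (by ring)))
    _ = (∫ ω, (if α * z ≤ |X ω| then (X ω - X' ω) ^ 2 else 0) ∂μ)
          + ∫ ω, (if (1 - α) * z ≤ |X' ω| then (X' ω - X ω) ^ 2 else 0) ∂μ :=
        integral_add h_int_A h_int_B
    _ ≤ _ := by
        rw [← h_tail_law]
        exact add_le_add
          (integral_ite_sub_sq_le_two_mul_integral_ite_sq hindep hid hX hmean' _)
          (integral_ite_sub_sq_le_two_mul_integral_ite_sq hindep.symm hid.symm hX' hmean _)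

theorem quadratic_tails_symmetrization_alpha
    {Ω : Type*} [MeasurableSpace Ω] (μ : Measure Ω) [IsProbabilityMeasure μ]
    (X X' : Ω → ℝ) (hX : Measurable X) (hX' : Measurable X')
    (hindep : IndepFun X X' μ) (hid : IdentDistrib X X' μ μ)
    (hmean : ∫ ω, X ω ∂μ = 0)
    (hL2 : Integrable (fun ω => (X ω) ^ 2) μ)
    (z : ℝ) (hz : 0 ≤ z) (α : ℝ) (hα : α ∈ Set.Icc (0 : ℝ) 1) :
    (∫ ω, (if z ≤ |X ω - X' ω| then (X ω - X' ω) ^ 2 else 0) ∂μ)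
      ≤ 2 * (∫ ω, (if α * z ≤ |X ω| then (X ω) ^ 2 else 0) ∂μ)
        + 2 * (∫ ω, (if (1 - α) * z ≤ |X ω| then (X ω) ^ 2 else 0) ∂μ) :=
  quadratic_tails_symmetrization_alpha_general μ X X' hindep hid hmean hL2 z α
end

section
/- For every z > 0, the supremum over all zero-mean random variables X with finite positive second moment of the ratio E[(X−X')^2 · 1{|X−X'| ≥ z}] / E[X^2 · 1{|X| ≥ z/2}] equals 4, where X' is an independent copy of X. In particular, the two-point distributions P(X = qz) = p, P(X = −pz) = q with q = 1−p and p → 1/2+ attain the supremum in the limit. -/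
/-!
If `|x - y| ≥ z` then `|x| ≥ z/2` or `|y| ≥ z/2`. With `s = {|x| ≥ z/2}` and symmetry, the
symmetrized tail is therefore at most `2 E[(X - X')²; X ∈ s] = 2 (E[X²; s] + E X² · P(s))`, the
cross term vanishing because `E X' = 0`. Splitting `E X²` at level `z/2` gives
`E X² · P(s) ≤ E[X²; s]`, hence the ratio is at most `4`.

Conversely the centered two-point law `P(X = (1-p) z) = p`, `P(X = -p z) = 1 - p` has ratio
`2 / p`, which sweeps out `(2, 4)` as `p` runs over `(1/2, 1)`.
-/

open MeasureTheory ProbabilityTheory Set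

section SecondMoment

variable {ν : Measure ℝ}

lemma integrable_id_of_integrable_sq [IsFiniteMeasure ν] (h : Integrable (fun x => x ^ 2) ν) :
    Integrable (fun x => x) ν :=
  ((memLp_two_iff_integrable_sq aestronglyMeasurable_id).2 h).integrable one_le_two

lemma integral_sub_sq_of_integral_eq_zero [IsProbabilityMeasure ν]
    (h2 : Integrable (fun x => x ^ 2) ν) (hmean : ∫ x, x ∂ν = 0) (x : ℝ) :
    ∫ y, (x - y) ^ 2 ∂ν = x ^ 2 + ∫ y, y ^ 2 ∂ν := by
  have h1 := integrable_id_of_integrable_sq h2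
  have hexp : (fun y => (x - y) ^ 2) = fun y => x ^ 2 - 2 * x * y + y ^ 2 := by
    funext y; ring
  have hlin : Integrable (fun y => x ^ 2 - 2 * x * y) ν :=
    (integrable_const _).sub (h1.const_mul _)
  rw [hexp, integral_add hlin h2, integral_sub (integrable_const _) (h1.const_mul _),
    integral_const_mul, hmean]
  simp

lemma integrable_sub_sq_prod {μ : Measure ℝ} [IsFiniteMeasure μ] [IsFiniteMeasure ν]
    (hμ : Integrable (fun x => x ^ 2) μ) (hν : Integrable (fun x => x ^ 2) ν) :
    Integrable (fun q : ℝ × ℝ => (q.1 - q.2) ^ 2) (μ.prod ν) := by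
  have hexp : (fun q : ℝ × ℝ => (q.1 - q.2) ^ 2)
      = fun q => q.1 ^ 2 + q.2 ^ 2 - 2 * (q.1 * q.2) := by
    funext q; ring
  rw [hexp]
  exact ((hμ.comp_fst ν).add (hν.comp_snd μ)).sub
    (((integrable_id_of_integrable_sq hμ).mul_prod (integrable_id_of_integrable_sq hν)).const_mul 2)

lemma setIntegral_prod_univ_sub_sq [IsProbabilityMeasure ν]
    (h2 : Integrable (fun x => x ^ 2) ν) (hmean : ∫ x, x ∂ν = 0) (s : Set ℝ) :
    ∫ q in s ×ˢ univ, (q.1 - q.2) ^ 2 ∂ν.prod ν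
      = ∫ x in s, x ^ 2 ∂ν + (∫ x, x ^ 2 ∂ν) * ν.real s := by
  rw [setIntegral_prod _ (integrable_sub_sq_prod h2 h2).integrableOn]
  simp only [Measure.restrict_univ, integral_sub_sq_of_integral_eq_zero h2 hmean]
  rw [integral_add h2.integrableOn (integrableOn_const (measure_ne_top _ _)), setIntegral_const,
    smul_eq_mul, mul_comm]

lemma integral_sq_mul_measureReal_le_setIntegral_sq_s2 [IsProbabilityMeasure ν] {c : ℝ}
    (hc : 0 ≤ c) (h2 : Integrable (fun x => x ^ 2) ν) :
    (∫ x, x ^ 2 ∂ν) * ν.real {x | c ≤ |x|} ≤ ∫ x in {x | c ≤ |x|}, x ^ 2 ∂ν := by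
  set s := {x : ℝ | c ≤ |x|}
  have hs : MeasurableSet s := measurableSet_le measurable_const measurable_id.abs
  have hsq_ge : c ^ 2 * ν.real s ≤ ∫ x in s, x ^ 2 ∂ν :=
    setIntegral_ge_of_const_le_real hs (measure_ne_top _ _)
      (fun x hx => by simpa [sq_abs] using pow_le_pow_left₀ hc hx 2) h2.integrableOn
  have hsq_le : ∫ x in sᶜ, x ^ 2 ∂ν ≤ c ^ 2 * ν.real sᶜ := by
    calc ∫ x in sᶜ, x ^ 2 ∂ν ≤ ∫ _ in sᶜ, c ^ 2 ∂ν :=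
          setIntegral_mono_on h2.integrableOn (integrableOn_const (measure_ne_top _ _)) hs.compl
            fun x hx => by
              simpa [sq_abs] using pow_le_pow_left₀ (abs_nonneg x) (le_of_lt (not_le.1 hx)) 2
      _ = c ^ 2 * ν.real sᶜ := by rw [setIntegral_const, smul_eq_mul, mul_comm]
  have hsplit := integral_add_compl hs h2
  rw [probReal_compl_eq_one_sub hs] at hsq_le
  have hμ0 : 0 ≤ ν.real s := measureReal_nonneg
  have hμ1 : ν.real s ≤ 1 := measureReal_le_one
  -- weigh the bound on `sᶜ` by `P(s)` and the bound on `s` by `1 - P(s)`, then add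
  nlinarith [mul_le_mul_of_nonneg_left hsq_le hμ0,
    mul_le_mul_of_nonneg_left hsq_ge (sub_nonneg.2 hμ1)]

lemma setIntegral_sub_sq_le_four_mul [IsProbabilityMeasure ν] {z : ℝ} (hz : 0 ≤ z)
    (h2 : Integrable (fun x => x ^ 2) ν) (hmean : ∫ x, x ∂ν = 0) :
    ∫ q in {q : ℝ × ℝ | z ≤ |q.1 - q.2|}, (q.1 - q.2) ^ 2 ∂ν.prod ν
      ≤ 4 * ∫ x in {x | z / 2 ≤ |x|}, x ^ 2 ∂ν := by
  set s := {x : ℝ | z / 2 ≤ |x|}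
  have hint := integrable_sub_sq_prod h2 h2
  have hnonneg : ∀ {m : Measure (ℝ × ℝ)}, 0 ≤ᵐ[m] fun q : ℝ × ℝ => (q.1 - q.2) ^ 2 :=
    Filter.Eventually.of_forall fun q => sq_nonneg _
  have hcover : {q : ℝ × ℝ | z ≤ |q.1 - q.2|} ⊆ s ×ˢ univ ∪ univ ×ˢ s := by
    rintro q (hq : z ≤ |q.1 - q.2|)
    by_contra h
    simp only [s, mem_union, mem_prod, mem_ofPred_eq, mem_univ, and_true, true_and, not_or,
      not_le] at h
    linarith [abs_sub q.1 q.2, h.1, h.2]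
  have hswap : ∫ q in univ ×ˢ s, (q.1 - q.2) ^ 2 ∂ν.prod ν
      = ∫ q in s ×ˢ univ, (q.1 - q.2) ^ 2 ∂ν.prod ν := by
    rw [← setIntegral_prod_swap]
    simp only [Prod.fst_swap, Prod.snd_swap]
    congr 1 with q
    ring
  calc ∫ q in {q : ℝ × ℝ | z ≤ |q.1 - q.2|}, (q.1 - q.2) ^ 2 ∂ν.prod ν
      ≤ ∫ q in s ×ˢ univ ∪ univ ×ˢ s, (q.1 - q.2) ^ 2 ∂ν.prod ν :=
        setIntegral_mono_set hint.integrableOn hnonneg hcover.eventuallyLE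
    _ ≤ ∫ q in s ×ˢ univ, (q.1 - q.2) ^ 2 ∂ν.prod ν
          + ∫ q in univ ×ˢ s, (q.1 - q.2) ^ 2 ∂ν.prod ν := by
        rw [← integral_add_measure hint.integrableOn hint.integrableOn]
        exact integral_mono_measure (Measure.restrict_union_le _ _) hnonneg
          (Integrable.add_measure hint.integrableOn hint.integrableOn)
    _ = 2 * (∫ x in s, x ^ 2 ∂ν + (∫ x, x ^ 2 ∂ν) * ν.real s) := by
        rw [hswap, setIntegral_prod_univ_sub_sq h2 hmean]
        ring
    _ ≤ 4 * ∫ x in s, x ^ 2 ∂ν := by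
        linarith [integral_sq_mul_measureReal_le_setIntegral_sq_s2 (by positivity : 0 ≤ z / 2) h2]

end SecondMoment

section TwoPoint

variable {α : Type*} [MeasurableSpace α]

noncomputable def twoPoint (p : ℝ) (a b : α) : Measure α :=
  ENNReal.ofReal p • Measure.dirac a + ENNReal.ofReal (1 - p) • Measure.dirac b

variable {p : ℝ} {a b : α}

instance : SFinite (twoPoint p a b) := by
  unfold twoPoint; infer_instance

lemma isProbabilityMeasure_twoPoint (hp0 : 0 ≤ p) (hp1 : p ≤ 1) :
    IsProbabilityMeasure (twoPoint p a b) := by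
  constructor
  simp [twoPoint, ← ENNReal.ofReal_add hp0 (sub_nonneg.2 hp1)]

variable [MeasurableSingletonClass α]

lemma integrable_twoPoint (f : α → ℝ) : Integrable f (twoPoint p a b) :=
  ((integrable_dirac enorm_lt_top).smul_measure ENNReal.ofReal_ne_top).add_measure
    ((integrable_dirac enorm_lt_top).smul_measure ENNReal.ofReal_ne_top)

lemma integral_twoPoint (hp0 : 0 ≤ p) (hp1 : p ≤ 1) (f : α → ℝ) :
    ∫ x, f x ∂twoPoint p a b = p * f a + (1 - p) * f b := by
  rw [twoPoint,
    integral_add_measure ((integrable_dirac enorm_lt_top).smul_measure ENNReal.ofReal_ne_top)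
      ((integrable_dirac enorm_lt_top).smul_measure ENNReal.ofReal_ne_top),
    integral_smul_measure, integral_smul_measure, integral_dirac, integral_dirac,
    ENNReal.toReal_ofReal hp0, ENNReal.toReal_ofReal (sub_nonneg.2 hp1), smul_eq_mul, smul_eq_mul]

lemma integral_prod_twoPoint (hp0 : 0 ≤ p) (hp1 : p ≤ 1) {f : α × α → ℝ}
    (hf : StronglyMeasurable f) :
    ∫ q, f q ∂(twoPoint p a b).prod (twoPoint p a b)
      = p * (p * f (a, a) + (1 - p) * f (a, b))
        + (1 - p) * (p * f (b, a) + (1 - p) * f (b, b)) := by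
  have hint : Integrable f ((twoPoint p a b).prod (twoPoint p a b)) :=
    (integrable_prod_iff hf.aestronglyMeasurable).2
      ⟨Filter.Eventually.of_forall fun _ => integrable_twoPoint _, integrable_twoPoint _⟩
  simp only [integral_prod f hint, integral_twoPoint hp0 hp1]

end TwoPoint

noncomputable def centeredTwoPoint (p z : ℝ) : Measure ℝ := twoPoint p ((1 - p) * z) (-(p * z))

section CenteredTwoPoint

variable {p z : ℝ}

lemma integral_id_centeredTwoPoint (hp0 : 0 ≤ p) (hp1 : p ≤ 1) :
    ∫ x, x ∂centeredTwoPoint p z = 0 := by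
  rw [centeredTwoPoint, integral_twoPoint hp0 hp1]
  ring

lemma integral_tail_centeredTwoPoint (hz : 0 < z) (hp : 1 / 2 < p) (hp1 : p ≤ 1) :
    ∫ x, (if z / 2 ≤ |x| then x ^ 2 else 0) ∂centeredTwoPoint p z = (1 - p) * (p * z) ^ 2 := by
  have hp0 : 0 < p := by linarith
  rw [centeredTwoPoint, integral_twoPoint hp0.le hp1,
    abs_of_nonneg (mul_nonneg (sub_nonneg.2 hp1) hz.le), abs_neg, abs_of_pos (mul_pos hp0 hz),
    if_neg (by nlinarith), if_pos (by nlinarith)]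
  ring

lemma integral_symmTail_centeredTwoPoint (hz : 0 < z) (hp0 : 0 ≤ p) (hp1 : p ≤ 1) :
    ∫ q : ℝ × ℝ, (if z ≤ |q.1 - q.2| then (q.1 - q.2) ^ 2 else 0)
        ∂(centeredTwoPoint p z).prod (centeredTwoPoint p z) = 2 * p * (1 - p) * z ^ 2 := by
  have hmeas : Measurable fun q : ℝ × ℝ => if z ≤ |q.1 - q.2| then (q.1 - q.2) ^ 2 else 0 :=
    Measurable.ite (measurableSet_le measurable_const (by fun_prop)) (by fun_prop) measurable_const
  rw [centeredTwoPoint, integral_prod_twoPoint hp0 hp1 hmeas.stronglyMeasurable]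
  have hab : (1 - p) * z - -(p * z) = z := by ring
  have hba : -(p * z) - (1 - p) * z = -z := by ring
  simp only [sub_self, abs_zero, hab, hba, abs_neg, abs_of_pos hz, if_neg (not_le.2 hz), le_refl,
    if_true]
  ring

end CenteredTwoPoint

lemma integral_ite_le_abs_eq_setIntegral {β : Type*} [MeasurableSpace β] {μ : Measure β}
    {c : ℝ} {f : β → ℝ} (hf : Measurable f) :
    ∫ x, (if c ≤ |f x| then f x ^ 2 else 0) ∂μ = ∫ x in {x | c ≤ |f x|}, f x ^ 2 ∂μ := by
  rw [← integral_indicator (measurableSet_le measurable_const hf.abs)]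
  rfl

/-- The supremum over all centered distributions (with positive truncated second moment)
of the ratio of the symmetrized quadratic tail at level `z` to the quadratic tail at
level `z/2` equals `4`. -/
theorem quadratic_tails_ratio_sup_eq_four (z : ℝ) (hz : 0 < z) :
    IsLUB {r : ℝ | ∃ ν : Measure ℝ, IsProbabilityMeasure ν ∧
        Integrable (fun x => x ^ 2) ν ∧ (∫ x, x ∂ν) = 0 ∧
        0 < (∫ x, (if z / 2 ≤ |x| then x ^ 2 else 0) ∂ν) ∧
        r = (∫ q : ℝ × ℝ, (if z ≤ |q.1 - q.2| then (q.1 - q.2) ^ 2 else 0) ∂(ν.prod ν)) /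
            (∫ x, (if z / 2 ≤ |x| then x ^ 2 else 0) ∂ν)} 4 := by
  refine (isLUB_Ioo (by norm_num : (2 : ℝ) < 4)).of_subset_of_superset isLUB_Iic ?_ ?_
  · rintro r ⟨hr2, hr4⟩
    have hr0 : 0 < r := by linarith
    have hp : 1 / 2 < 2 / r := by rw [lt_div_iff₀ hr0]; linarith
    have hp1 : 2 / r < 1 := by rw [div_lt_iff₀ hr0]; linarith
    have hp0 : 0 ≤ 2 / r := by positivity
    refine ⟨centeredTwoPoint (2 / r) z, isProbabilityMeasure_twoPoint hp0 hp1.le,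
      integrable_twoPoint _, integral_id_centeredTwoPoint hp0 hp1.le, ?_, ?_⟩
    · rw [integral_tail_centeredTwoPoint hz hp hp1.le]
      exact mul_pos (by linarith) (by positivity)
    · rw [integral_tail_centeredTwoPoint hz hp hp1.le,
        integral_symmTail_centeredTwoPoint hz hp0 hp1.le]
      field_simp
  · rintro r ⟨ν, hν, h2, hmean, hT, rfl⟩
    rw [mem_Iic, div_le_iff₀ hT,
      integral_ite_le_abs_eq_setIntegral (f := fun x : ℝ => x) measurable_id,
      integral_ite_le_abs_eq_setIntegral (f := fun q : ℝ × ℝ => q.1 - q.2) (by fun_prop)]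
    exact setIntegral_sub_sq_le_four_mul hz.le h2 hmean
end

section
/- The function g(θ) = a(θ)/b(θ), where a(θ) = 2(1−cos θ)/θ^2 − sin θ/(2θ) and b(θ) = (1−cos θ)/θ^4 − sin θ/(2θ^3), is strictly monotonically increasing on [0, 2π) (with g(0) = 12 defined by continuity), and sup over θ ∈ (0, 2π) of a(θ)/b(θ) equals the limit as θ → 2π−, which is 4π². -/
noncomputable def a (θ : ℝ) : ℝ :=
  2 * (1 - Real.cos θ) / θ ^ 2 - Real.sin θ / (2 * θ)

noncomputable def b (θ : ℝ) : ℝ :=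
  (1 - Real.cos θ) / θ ^ 4 - Real.sin θ / (2 * θ ^ 3)

noncomputable def g (θ : ℝ) : ℝ := if θ = 0 then 12 else a θ / b θ


/-!
With θ = 2u, the ratio a/b becomes `halfRatio u = 4u²(2 sin u - u cos u)/(sin u - u cos u)`, and
`halfRatio' = 4u E(u)/(sin u - u cos u)²`. The numerator `E = halfRatioDerivNum` vanishes to second
order at 0 with `E'' u = 2u (sin 2u - 2u cos 2u)`, so `E > 0` on `(0, π/2]` by the inequality
`x cos x < sin x` on `(0, π]`; on `[π/2, π)` the same inequality at `u - π/2`, together with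
`π² < 16`, gives `E > 0` directly. Hence `halfRatio` increases on `(0, π)`; it stays above 12
because `halfRatio u - 12` has the sign of a function vanishing at 0 with positive derivative, and
its value at the right end is `halfRatio π = 4π²`.
-/

open Real Set Filter Topology

theorem pos_of_eq_zero_of_hasDerivAt_pos {F F' : ℝ → ℝ} {l r x : ℝ}
    (hF : ∀ y, HasDerivAt F (F' y) y) (hF' : ∀ y ∈ Ioo l r, 0 < F' y) (hl : F l = 0)
    (hx : x ∈ Ioc l r) : 0 < F x := by
  have hmono : StrictMonoOn F (Icc l r) :=
    strictMonoOn_of_hasDerivWithinAt_pos (convex_Icc l r)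
      (fun y _ ↦ (hF y).continuousAt.continuousWithinAt) (fun y _ ↦ (hF y).hasDerivWithinAt)
      (fun y hy ↦ hF' y (by rwa [interior_Icc] at hy))
  exact hl ▸ hmono (left_mem_Icc.2 (hx.1.le.trans hx.2)) (Ioc_subset_Icc_self hx) hx.1

theorem mul_cos_lt_sin {u : ℝ} (h0 : 0 < u) (hπ : u ≤ π) : u * cos u < sin u := by
  have hderiv (y : ℝ) : HasDerivAt (fun y ↦ sin y - y * cos y) (y * sin y) y :=
    ((hasDerivAt_sin y).sub ((hasDerivAt_id' y).mul (hasDerivAt_cos y))).congr_deriv (by ring)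
  have := pos_of_eq_zero_of_hasDerivAt_pos hderiv
    (fun y hy ↦ mul_pos hy.1 (sin_pos_of_pos_of_lt_pi hy.1 hy.2)) (by simp) ⟨h0, hπ⟩
  simpa only [sub_pos] using this

theorem mul_cos_le_sin {u : ℝ} (h0 : 0 ≤ u) (hπ : u ≤ π) : u * cos u ≤ sin u := by
  rcases h0.eq_or_lt with rfl | h0
  · simp
  · exact (mul_cos_lt_sin h0 hπ).le

noncomputable def halfRatio (u : ℝ) : ℝ :=
  4 * u ^ 2 * (2 * sin u - u * cos u) / (sin u - u * cos u)

noncomputable def halfRatioDerivNum (u : ℝ) : ℝ :=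
  4 * sin u ^ 2 - 5 * u * sin u * cos u + u ^ 2 * (cos u ^ 2 - sin u ^ 2)

theorem hasDerivAt_halfRatio {u : ℝ} (hu : sin u - u * cos u ≠ 0) :
    HasDerivAt halfRatio (4 * u * halfRatioDerivNum u / (sin u - u * cos u) ^ 2) u := by
  have hden : HasDerivAt (fun x ↦ sin x - x * cos x) (u * sin u) u :=
    ((hasDerivAt_sin u).sub ((hasDerivAt_id' u).mul (hasDerivAt_cos u))).congr_deriv (by ring)
  have hnum : HasDerivAt (fun x ↦ 4 * x ^ 2 * (2 * sin x - x * cos x))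
      (8 * u * (2 * sin u - u * cos u) + 4 * u ^ 2 * (cos u + u * sin u)) u :=
    (((hasDerivAt_pow 2 u).const_mul 4).mul (((hasDerivAt_sin u).const_mul 2).sub
      ((hasDerivAt_id' u).mul (hasDerivAt_cos u)))).congr_deriv
      (by simp only [Pi.sub_apply, Pi.mul_apply]; push_cast; ring)
  refine (hnum.div hden hu).congr_deriv ?_
  rw [halfRatioDerivNum]
  field_simp
  ring

theorem hasDerivAt_halfRatioDerivNum (u : ℝ) : HasDerivAt halfRatioDerivNum
    (3 * sin u * cos u - 3 * u * (cos u ^ 2 - sin u ^ 2) - 4 * u ^ 2 * sin u * cos u) u := by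
  have hs := hasDerivAt_sin u
  have hc := hasDerivAt_cos u
  have hid := hasDerivAt_id' u
  refine ((((hs.pow 2).const_mul 4).sub (((hid.const_mul 5).mul hs).mul hc)).add
    ((hid.pow 2).mul ((hc.pow 2).sub (hs.pow 2)))).congr_deriv ?_
  simp only [Pi.mul_apply, Pi.pow_apply, Pi.sub_apply]
  push_cast
  ring

theorem hasDerivAt_halfRatioDerivNum_deriv (u : ℝ) : HasDerivAt
    (fun u ↦ 3 * sin u * cos u - 3 * u * (cos u ^ 2 - sin u ^ 2) - 4 * u ^ 2 * sin u * cos u)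
    (2 * u * (sin (2 * u) - 2 * u * cos (2 * u))) u := by
  have hs := hasDerivAt_sin u
  have hc := hasDerivAt_cos u
  have hid := hasDerivAt_id' u
  refine ((((hs.const_mul 3).mul hc).sub ((hid.const_mul 3).mul ((hc.pow 2).sub (hs.pow 2)))).sub
    ((((hid.pow 2).const_mul 4).mul hs).mul hc)).congr_deriv ?_
  simp only [Pi.mul_apply, Pi.pow_apply, Pi.sub_apply, sin_two_mul, cos_two_mul]
  push_cast
  linear_combination (4 * u ^ 2) * sin_sq_add_cos_sq u

theorem halfRatioDerivNum_pos_of_le_pi_div_two {u : ℝ} (h0 : 0 < u) (h : u ≤ π / 2) :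
    0 < halfRatioDerivNum u := by
  have hderiv_pos : ∀ y ∈ Ioc 0 (π / 2),
      0 < 3 * sin y * cos y - 3 * y * (cos y ^ 2 - sin y ^ 2) - 4 * y ^ 2 * sin y * cos y :=
    fun y hy ↦ (pos_of_eq_zero_of_hasDerivAt_pos hasDerivAt_halfRatioDerivNum_deriv
      (fun z hz ↦ mul_pos (by linarith [hz.1])
        (sub_pos.2 (mul_cos_lt_sin (by linarith [hz.1]) (by linarith [hz.2])))) (by simp) hy :)
  exact pos_of_eq_zero_of_hasDerivAt_pos hasDerivAt_halfRatioDerivNum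
    (fun y hy ↦ hderiv_pos y (Ioo_subset_Ioc_self hy)) (by simp [halfRatioDerivNum]) ⟨h0, h⟩

theorem halfRatioDerivNum_pos_of_pi_div_two_le {u : ℝ} (h : π / 2 ≤ u) (hπ : u < π) :
    0 < halfRatioDerivNum u := by
  have hsin : 0 < sin u := sin_pos_of_pos_of_lt_pi (by linarith [pi_pos]) hπ
  have hkey : (u - π / 2) * sin u ≤ -cos u := by
    simpa [sin_sub_pi_div_two, cos_sub_pi_div_two] using
      mul_cos_le_sin (sub_nonneg.2 h) (by linarith)
  -- so `E u ≥ sin² u (4 + 5ut + u²t² - u²)` with `t = u - π / 2`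
  have hk : 0 ≤ (u - π / 2) * sin u := mul_nonneg (sub_nonneg.2 h) hsin.le
  have hpoly : 0 < 4 + 5 * u * (u - π / 2) + u ^ 2 * (u - π / 2) ^ 2 - u ^ 2 := by
    nlinarith [pi_lt_four, pi_pos, sq_nonneg (u * (u - π / 2))]
  have h1 : 5 * u * sin u * ((u - π / 2) * sin u) ≤ 5 * u * sin u * -cos u :=
    mul_le_mul_of_nonneg_left hkey (mul_nonneg (by linarith [pi_pos]) hsin.le)
  have h2 : ((u - π / 2) * sin u) ^ 2 ≤ (-cos u) ^ 2 := pow_le_pow_left₀ hk hkey 2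
  rw [halfRatioDerivNum]
  nlinarith [mul_pos (pow_pos hsin 2) hpoly, mul_le_mul_of_nonneg_left h2 (sq_nonneg u)]

theorem halfRatioDerivNum_pos {u : ℝ} (h0 : 0 < u) (hπ : u < π) : 0 < halfRatioDerivNum u := by
  rcases le_total u (π / 2) with h | h
  · exact halfRatioDerivNum_pos_of_le_pi_div_two h0 h
  · exact halfRatioDerivNum_pos_of_pi_div_two_le h hπ

theorem strictMonoOn_halfRatio : StrictMonoOn halfRatio (Ioo 0 π) := by
  have hderiv : ∀ u ∈ Ioo 0 π, HasDerivAt halfRatio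
      (4 * u * halfRatioDerivNum u / (sin u - u * cos u) ^ 2) u :=
    fun u hu ↦ hasDerivAt_halfRatio (sub_pos.2 (mul_cos_lt_sin hu.1 hu.2.le)).ne'
  refine strictMonoOn_of_hasDerivWithinAt_pos (convex_Ioo 0 π)
    (f' := fun u ↦ 4 * u * halfRatioDerivNum u / (sin u - u * cos u) ^ 2)
    (fun u hu ↦ (hderiv u hu).continuousAt.continuousWithinAt) (fun u hu ↦ ?_) (fun u hu ↦ ?_)
    <;> rw [interior_Ioo] at hu
  · exact (hderiv u hu).hasDerivWithinAt
  · exact div_pos (mul_pos (by linarith [hu.1]) (halfRatioDerivNum_pos hu.1 hu.2))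
      (pow_pos (sub_pos.2 (mul_cos_lt_sin hu.1 hu.2.le)) 2)

theorem twelve_lt_halfRatio {u : ℝ} (h0 : 0 < u) (hπ : u < π) : 12 < halfRatio u := by
  -- `halfRatio u - 12 = 4 G u / (sin u - u cos u)` for the function `G` below
  have hderiv (y : ℝ) : HasDerivAt (fun y ↦ sin y * (2 * y ^ 2 - 3) + y * cos y * (3 - y ^ 2))
      (y * (sin y - y * cos y + y ^ 2 * sin y)) y := by
    refine (((hasDerivAt_sin y).mul (((hasDerivAt_pow 2 y).const_mul 2).sub_const 3)).add
      (((hasDerivAt_id' y).mul (hasDerivAt_cos y)).mul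
        ((hasDerivAt_pow 2 y).const_sub 3))).congr_deriv ?_
    simp only [Pi.mul_apply]
    push_cast
    ring
  have hG := pos_of_eq_zero_of_hasDerivAt_pos hderiv (fun y hy ↦ mul_pos hy.1 (by
      nlinarith [mul_cos_lt_sin hy.1 hy.2.le, sin_pos_of_pos_of_lt_pi hy.1 hy.2, sq_nonneg y]))
    (by simp) ⟨h0, hπ.le⟩
  rw [halfRatio, lt_div_iff₀ (sub_pos.2 (mul_cos_lt_sin h0 hπ.le))]
  linarith

theorem continuousAt_halfRatio {u : ℝ} (hu : sin u - u * cos u ≠ 0) : ContinuousAt halfRatio u :=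
  ContinuousAt.div (by fun_prop) (by fun_prop) hu

theorem halfRatio_pi : halfRatio π = 4 * π ^ 2 := by
  rw [halfRatio, sin_pi, cos_pi]
  field_simp
  ring

theorem a_two_mul (u : ℝ) : a (2 * u) = sin u * (2 * sin u - u * cos u) / (2 * u ^ 2) := by
  rcases eq_or_ne u 0 with rfl | hu
  · simp [a]
  rw [a, cos_two_mul, sin_two_mul]
  field_simp
  linear_combination (-2) * sin_sq_add_cos_sq u

theorem b_two_mul (u : ℝ) : b (2 * u) = sin u * (sin u - u * cos u) / (8 * u ^ 4) := by
  rcases eq_or_ne u 0 with rfl | hu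
  · simp [b]
  rw [b, cos_two_mul, sin_two_mul]
  field_simp
  linear_combination (-16) * sin_sq_add_cos_sq u

theorem a_div_b_eq_halfRatio {θ : ℝ} (h0 : 0 < θ) (h2π : θ < 2 * π) :
    a θ / b θ = halfRatio (θ / 2) := by
  obtain ⟨u, rfl⟩ : ∃ u, θ = 2 * u := ⟨θ / 2, by ring⟩
  have hu : u ≠ 0 := by linarith
  have hsin : sin u ≠ 0 := (sin_pos_of_pos_of_lt_pi (by linarith) (by linarith)).ne'
  rw [a_two_mul, b_two_mul, halfRatio, mul_div_cancel_left₀ u two_ne_zero]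
  field_simp
  ring

theorem g_eq_halfRatio {θ : ℝ} (h0 : 0 < θ) (h2π : θ < 2 * π) : g θ = halfRatio (θ / 2) := by
  rw [g, if_neg h0.ne', a_div_b_eq_halfRatio h0 h2π]

theorem strictMonoOn_a_div_b : StrictMonoOn (fun θ ↦ a θ / b θ) (Ioo 0 (2 * π)) := by
  intro x hx y hy hxy
  simp only [a_div_b_eq_halfRatio hx.1 hx.2, a_div_b_eq_halfRatio hy.1 hy.2]
  exact strictMonoOn_halfRatio ⟨by linarith [hx.1], by linarith [hx.2]⟩
    ⟨by linarith [hy.1], by linarith [hy.2]⟩ (by linarith)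

theorem g_strictMonoOn : StrictMonoOn g (Ico 0 (2 * π)) := by
  intro x hx y hy hxy
  have hy0 : 0 < y := hx.1.trans_lt hxy
  rcases hx.1.eq_or_lt with rfl | hx0
  · rw [g, if_pos rfl, g_eq_halfRatio hy0 hy.2]
    exact twelve_lt_halfRatio (by linarith) (by linarith [hy.2])
  · simp only [g, if_neg hx0.ne', if_neg hy0.ne']
    exact strictMonoOn_a_div_b ⟨hx0, hxy.trans hy.2⟩ ⟨hy0, hy.2⟩ hxy

theorem tendsto_a_div_b : Tendsto (fun θ ↦ a θ / b θ) (𝓝[<] (2 * π)) (𝓝 (4 * π ^ 2)) := by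
  have hhalf : Tendsto (fun θ : ℝ ↦ θ / 2) (𝓝[<] (2 * π)) (𝓝 π) :=
    ((continuous_id.div_const 2).tendsto' _ _ (by simp only [id]; ring)).mono_left
      nhdsWithin_le_nhds
  have hcont : ContinuousAt halfRatio π :=
    continuousAt_halfRatio (by simp [pi_ne_zero])
  rw [← halfRatio_pi]
  refine (hcont.tendsto.comp hhalf).congr' ?_
  filter_upwards [Ioo_mem_nhdsLT (by positivity : (0 : ℝ) < 2 * π)] with θ hθ
  exact (a_div_b_eq_halfRatio hθ.1 hθ.2).symm

theorem MonotoneOn.isLUB_image_Ioo_of_tendsto {α β : Type*} [LinearOrder α] [TopologicalSpace α]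
    [OrderTopology α] [DenselyOrdered α] [Preorder β] [TopologicalSpace β] [OrderClosedTopology β]
    {f : α → β} {l r : α} {L : β} (hlr : l < r) (hf : MonotoneOn f (Ioo l r))
    (hL : Tendsto f (𝓝[<] r) (𝓝 L)) : IsLUB (f '' Ioo l r) L := by
  have : (𝓝[<] r).NeBot := nhdsLT_neBot_of_exists_lt ⟨l, hlr⟩
  constructor
  · rintro _ ⟨x, hx, rfl⟩
    refine ge_of_tendsto hL ?_
    filter_upwards [Ioo_mem_nhdsLT hx.2] with y hy
    exact hf hx ⟨hx.1.trans hy.1, hy.2⟩ hy.1.le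
  · intro c hc
    refine le_of_tendsto hL ?_
    filter_upwards [Ioo_mem_nhdsLT hlr] with y hy
    exact hc (mem_image_of_mem f hy)

theorem g_strictMono_and_sup :
    StrictMonoOn g (Set.Ico 0 (2 * Real.pi)) ∧
    IsLUB {r : ℝ | ∃ θ ∈ Set.Ioo (0 : ℝ) (2 * Real.pi), r = a θ / b θ}
      (4 * Real.pi ^ 2) ∧
    Filter.Tendsto (fun θ => a θ / b θ)
      (nhdsWithin (2 * Real.pi) (Set.Iio (2 * Real.pi))) (nhds (4 * Real.pi ^ 2)) := by
  have hset : {r : ℝ | ∃ θ ∈ Ioo (0 : ℝ) (2 * π), r = a θ / b θ}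
      = (fun θ ↦ a θ / b θ) '' Ioo 0 (2 * π) := by
    ext r
    simp only [mem_ofPred_eq, mem_image, eq_comm]
  refine ⟨g_strictMonoOn, ?_, tendsto_a_div_b⟩
  rw [hset]
  exact strictMonoOn_a_div_b.monotoneOn.isLUB_image_Ioo_of_tendsto (by positivity)
    tendsto_a_div_b
end

section
/- The equation 8(cos x − 1) + 8x sin x − 4x² cos x − x³ sin x = 0 has a unique root x₀ in the interval (0, 2π], and this root lies in (π, 2π). -/
/-!
With `u = x / 2`, the left-hand side factors as `16 (sin u - u cos u) g(u)` where
`g(u) = (u² - 1) sin u + u cos u`. The first factor is positive on `(0, π]`, since its derivative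
is `u sin u`. As `g' u = u (sin u + u cos u)` and `sin u + u cos u` changes sign exactly once on
`(0, π)`, at some `c > π / 2`, the function `g` increases from `g 0 = 0` up to `c` and then
decreases to `g π = -π`; so it has exactly one zero in `(0, π]`, and that zero lies in `(c, π)`.
-/

open Real Set

theorem exists_unique_zero_of_strictMonoOn_of_strictAntiOn {g : ℝ → ℝ} {a b c : ℝ}
    (hac : a < c) (hcb : c ≤ b) (hmono : StrictMonoOn g (Icc a c))
    (hanti : StrictAntiOn g (Icc c b)) (hcont : ContinuousOn g (Icc c b))
    (ha : g a = 0) (hb : g b < 0) :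
    ∃ x ∈ Ioo c b, g x = 0 ∧ ∀ y ∈ Ioc a b, g y = 0 → y = x := by
  have hc : 0 < g c := ha ▸ hmono (left_mem_Icc.2 hac.le) (right_mem_Icc.2 hac.le) hac
  obtain ⟨x, hx, hgx⟩ := intermediate_value_Ioo' hcb hcont ⟨hb, hc⟩
  refine ⟨x, hx, hgx, fun y hy hgy => ?_⟩
  rcases le_or_gt y c with hyc | hcy
  · have := hmono (left_mem_Icc.2 hac.le) ⟨hy.1.le, hyc⟩ hy.1
    linarith
  · exact hanti.injOn ⟨hcy.le, hy.2⟩ ⟨hx.1.le, hx.2.le⟩ (hgy.trans hgx.symm)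

theorem sin_sub_mul_cos_pos {u : ℝ} (h0 : 0 < u) (hπ : u ≤ π) : 0 < sin u - u * cos u := by
  have hmono : StrictMonoOn (fun u => sin u - u * cos u) (Icc 0 π) := by
    refine strictMonoOn_of_deriv_pos (convex_Icc _ _) (by fun_prop) fun v hv => ?_
    rw [interior_Icc] at hv
    have hd : HasDerivAt (fun u => sin u - u * cos u) (v * sin v) v :=
      ((hasDerivAt_sin v).sub (hasDerivAt_id' v |>.mul (hasDerivAt_cos v))).congr_deriv
        (by ring)
    rw [hd.deriv]
    exact mul_pos hv.1 (sin_pos_of_pos_of_lt_pi hv.1 hv.2)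
  simpa using hmono (left_mem_Icc.2 pi_pos.le) ⟨h0.le, hπ⟩ h0

theorem exists_sign_change_sin_add_mul_cos :
    ∃ c ∈ Ioo (π / 2) π, (∀ u ∈ Ioo 0 c, 0 < sin u + u * cos u) ∧
      ∀ u ∈ Ioo c π, sin u + u * cos u < 0 := by
  have hanti : StrictAntiOn (fun u => sin u + u * cos u) (Icc (π / 2) π) := by
    refine strictAntiOn_of_deriv_neg (convex_Icc _ _) (by fun_prop) fun v hv => ?_
    rw [interior_Icc] at hv
    have hd : HasDerivAt (fun u => sin u + u * cos u) (2 * cos v - v * sin v) v :=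
      ((hasDerivAt_sin v).add (hasDerivAt_id' v |>.mul (hasDerivAt_cos v))).congr_deriv
        (by ring)
    have hcos : cos v < 0 := cos_neg_of_pi_div_two_lt_of_lt hv.1 (by linarith [hv.2, pi_pos])
    have hsin : 0 < sin v := sin_pos_of_pos_of_lt_pi (by linarith [pi_pos, hv.1]) hv.2
    rw [hd.deriv]
    nlinarith [mul_pos (by linarith [pi_pos, hv.1] : 0 < v) hsin]
  obtain ⟨c, hc, hψc⟩ := intermediate_value_Ioo' (by linarith [pi_pos])
    (by fun_prop : ContinuousOn (fun u => sin u + u * cos u) (Icc (π / 2) π))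
    (show (0 : ℝ) ∈ Ioo _ _ by simp [pi_pos])
  have hψ : sin c + c * cos c = 0 := hψc
  refine ⟨c, hc, fun u hu => ?_, fun u hu => ?_⟩
  · rcases le_or_gt u (π / 2) with hu2 | hu2
    · have hsin : 0 < sin u := sin_pos_of_pos_of_lt_pi hu.1 (by linarith [pi_pos])
      have hcos : 0 ≤ cos u := cos_nonneg_of_mem_Icc ⟨by linarith [pi_pos, hu.1], hu2⟩
      positivity [hu.1]
    · exact hψ ▸ hanti ⟨hu2.le, by linarith [hu.2, hc.2]⟩ ⟨hc.1.le, hc.2.le⟩ hu.2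
  · exact hψ ▸ hanti ⟨hc.1.le, hc.2.le⟩ ⟨by linarith [hu.1, hc.1], hu.2.le⟩ hu.1

noncomputable def halfAngleFactor (u : ℝ) : ℝ := (u ^ 2 - 1) * sin u + u * cos u

theorem hasDerivAt_halfAngleFactor (u : ℝ) :
    HasDerivAt halfAngleFactor (u * (sin u + u * cos u)) u := by
  refine ((((hasDerivAt_pow 2 u).sub_const 1).mul (hasDerivAt_sin u)).add
    (hasDerivAt_id' u |>.mul (hasDerivAt_cos u))).congr_deriv ?_
  ring

theorem continuous_halfAngleFactor : Continuous halfAngleFactor := by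
  unfold halfAngleFactor
  fun_prop

theorem exists_unique_zero_halfAngleFactor :
    ∃ u₀ ∈ Ioo (π / 2) π, halfAngleFactor u₀ = 0 ∧
      ∀ u ∈ Ioc 0 π, halfAngleFactor u = 0 → u = u₀ := by
  obtain ⟨c, hc, hpos, hneg⟩ := exists_sign_change_sin_add_mul_cos
  have hc0 : 0 < c := by linarith [pi_pos, hc.1]
  have hmono : StrictMonoOn halfAngleFactor (Icc 0 c) := by
    refine strictMonoOn_of_deriv_pos (convex_Icc _ _)
      continuous_halfAngleFactor.continuousOn fun u hu => ?_
    rw [interior_Icc] at hu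
    rw [(hasDerivAt_halfAngleFactor u).deriv]
    exact mul_pos hu.1 (hpos u hu)
  have hanti : StrictAntiOn halfAngleFactor (Icc c π) := by
    refine strictAntiOn_of_deriv_neg (convex_Icc _ _)
      continuous_halfAngleFactor.continuousOn fun u hu => ?_
    rw [interior_Icc] at hu
    rw [(hasDerivAt_halfAngleFactor u).deriv]
    exact mul_neg_of_pos_of_neg (hc0.trans hu.1) (hneg u hu)
  obtain ⟨u₀, hu₀, hzero, huniq⟩ := exists_unique_zero_of_strictMonoOn_of_strictAntiOn hc0
    hc.2.le hmono hanti continuous_halfAngleFactor.continuousOn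
    (by simp [halfAngleFactor]) (by simp [halfAngleFactor, pi_pos])
  exact ⟨u₀, ⟨hc.1.trans hu₀.1, hu₀.2⟩, hzero, huniq⟩

theorem eq_mul_halfAngleFactor (u : ℝ) :
    8 * (cos (2 * u) - 1) + 8 * (2 * u) * sin (2 * u) - 4 * (2 * u) ^ 2 * cos (2 * u)
      - (2 * u) ^ 3 * sin (2 * u) = 16 * (sin u - u * cos u) * halfAngleFactor u := by
  rw [sin_two_mul, cos_two_mul, halfAngleFactor]
  linear_combination (16 - 16 * u ^ 2) * sin_sq_add_cos_sq u

theorem unique_root_in_Ioc :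
    ∃ x₀ : ℝ, x₀ ∈ Set.Ioo Real.pi (2 * Real.pi) ∧
      8 * (Real.cos x₀ - 1) + 8 * x₀ * Real.sin x₀ - 4 * x₀ ^ 2 * Real.cos x₀
        - x₀ ^ 3 * Real.sin x₀ = 0 ∧
      ∀ y ∈ Set.Ioc (0 : ℝ) (2 * Real.pi),
        8 * (Real.cos y - 1) + 8 * y * Real.sin y - 4 * y ^ 2 * Real.cos y
          - y ^ 3 * Real.sin y = 0 → y = x₀ := by
  obtain ⟨u₀, hu₀, hzero, huniq⟩ := exists_unique_zero_halfAngleFactor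
  refine ⟨2 * u₀, ⟨by linarith [hu₀.1], by linarith [hu₀.2]⟩, ?_, fun y hy hfy => ?_⟩
  · rw [eq_mul_halfAngleFactor, hzero, mul_zero]
  · have hy2 : y / 2 ∈ Ioc 0 π := ⟨by linarith [hy.1], by linarith [hy.2]⟩
    rw [← mul_div_cancel₀ y two_ne_zero, eq_mul_halfAngleFactor] at hfy
    have hfactor := (sin_sub_mul_cos_pos hy2.1 hy2.2).ne'
    have := huniq (y / 2) hy2 (by simpa [hfactor] using hfy)
    linarith
end
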